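/- arXiv:1908.10330 — 9 statements merged into one kernel-verified Lean document; each statement's English description precedes it below -/
import Mathlib

section
/- For any k > 0 and ρ ∈ [0, 1), the function β̂(β) = (1 + kρβ)/(1 + k²β² + 2kρβ) has exactly one fixed point on [0, ∞), and that fixed point lies in the open interval (0, 1). -/
/-!
The best response `β̂` is strictly decreasing on `[0, ∞)`, so `β̂ - id` has at most one zero
there. Since `β̂ 0 = 1 > 0` and `β̂ 1 < 1`, the intermediate value theorem gives a zero in
`(0, 1)`, and monotonicity rules out any fixed point `β ≥ 1`.
-/

open Set Function

theorem StrictAntiOn.eq_of_isFixedPt {α : Type*} [LinearOrder α] {f : α → α} {s : Set α}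
    (hf : StrictAntiOn f s) {a b : α} (ha : a ∈ s) (hb : b ∈ s)
    (hfa : IsFixedPt f a) (hfb : IsFixedPt f b) : a = b := by
  rcases lt_trichotomy a b with hab | rfl | hba
  · have := hf ha hb hab
    rw [hfa, hfb] at this
    exact absurd hab this.not_gt
  · rfl
  · have := hf hb ha hba
    rw [hfa, hfb] at this
    exact absurd hba this.not_gt

noncomputable def bestResponse (k ρ β : ℝ) : ℝ :=
  (1 + k*ρ*β) / (1 + k^2*β^2 + 2*k*ρ*β)

section

variable {k ρ : ℝ}

theorem bestResponse_denom_pos (hk : 0 ≤ k) (hρ : 0 ≤ ρ) {β : ℝ} (hβ : 0 ≤ β) :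
    0 < 1 + k^2*β^2 + 2*k*ρ*β := by
  positivity

@[simp]
theorem bestResponse_zero : bestResponse k ρ 0 = 1 := by
  simp [bestResponse]

theorem bestResponse_one_lt_one (hk : 0 < k) (hρ : 0 ≤ ρ) : bestResponse k ρ 1 < 1 := by
  rw [bestResponse, div_lt_one (bestResponse_denom_pos hk.le hρ zero_le_one)]
  nlinarith

theorem strictAntiOn_bestResponse (hk : 0 < k) (hρ : 0 ≤ ρ) :
    StrictAntiOn (bestResponse k ρ) (Ici 0) := by
  intro a (ha : 0 ≤ a) b (hb : 0 ≤ b) hab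
  rw [bestResponse, bestResponse, div_lt_div_iff₀ (bestResponse_denom_pos hk.le hρ hb)
    (bestResponse_denom_pos hk.le hρ ha)]
  have hfactor : 0 < (b - a) * (k^2*(a + b) + k*ρ + k^3*ρ*a*b) := by
    have : 0 < k^2*(a + b) := mul_pos (pow_pos hk 2) (by linarith)
    exact mul_pos (sub_pos.mpr hab) (by positivity)
  linear_combination hfactor

theorem continuousOn_bestResponse (hk : 0 ≤ k) (hρ : 0 ≤ ρ) :
    ContinuousOn (bestResponse k ρ) (Ici 0) :=
  ContinuousOn.div (by fun_prop) (by fun_prop) fun _ hβ ↦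
    (bestResponse_denom_pos hk hρ hβ).ne'

theorem mem_Ioo_of_isFixedPt_bestResponse (hk : 0 < k) (hρ : 0 ≤ ρ) {β : ℝ} (hβ : 0 ≤ β)
    (hfix : IsFixedPt (bestResponse k ρ) β) : β ∈ Ioo 0 1 := by
  refine ⟨hβ.lt_of_ne ?_, ?_⟩
  · rintro rfl
    simp [IsFixedPt] at hfix
  · by_contra! h1
    have := (strictAntiOn_bestResponse hk hρ).antitoneOn (mem_Ici.mpr zero_le_one)
      (mem_Ici.mpr hβ) h1
    linarith [hfix.eq, bestResponse_one_lt_one hk hρ]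

theorem exists_isFixedPt_bestResponse (hk : 0 < k) (hρ : 0 ≤ ρ) :
    ∃ β ∈ Ioo 0 1, IsFixedPt (bestResponse k ρ) β := by
  have hcont : ContinuousOn (fun β ↦ bestResponse k ρ β - β) (Icc 0 1) :=
    ((continuousOn_bestResponse hk.le hρ).mono Icc_subset_Ici_self).sub continuousOn_id
  have hsign : (0 : ℝ) ∈ Ioo (bestResponse k ρ 1 - 1) (bestResponse k ρ 0 - 0) :=
    ⟨by linarith [bestResponse_one_lt_one hk hρ], by simp⟩
  obtain ⟨β, hβ, hzero⟩ := intermediate_value_Ioo' zero_le_one hcont hsign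
  exact ⟨β, hβ, sub_eq_zero.mp hzero⟩

end

/-- For k > 0 and ρ ∈ [0,1), β̂(β) = (1 + kρβ)/(1 + k²β² + 2kρβ) has exactly one
fixed point on [0,∞), and it lies in (0,1). -/
theorem stmt_1 (k ρ : ℝ) (hk : 0 < k) (hρ : ρ ∈ Set.Ico (0 : ℝ) 1) :
    (∃! β : ℝ, 0 ≤ β ∧ (1 + k*ρ*β) / (1 + k^2*β^2 + 2*k*ρ*β) = β) ∧
    (∀ β : ℝ, 0 ≤ β → (1 + k*ρ*β) / (1 + k^2*β^2 + 2*k*ρ*β) = β →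
      β ∈ Set.Ioo (0 : ℝ) 1) := by
  obtain ⟨β, hβ, hfix⟩ := exists_isFixedPt_bestResponse hk hρ.1
  refine ⟨⟨β, ⟨hβ.1.le, hfix⟩, fun b ⟨hb, hbfix⟩ ↦ ?_⟩,
    fun b hb hbfix ↦ mem_Ioo_of_isFixedPt_bestResponse hk hρ.1 hb hbfix⟩
  exact (strictAntiOn_bestResponse hk hρ.1).eq_of_isFixedPt hb hβ.1.le hbfix hfix
end

section
/- Let k > 0 and ρ ∈ (-1, 1), and let L(β) = (kβ² + β - 1)² + 2(1-ρ)β²(1-β)k. If β is any real number satisfying the fixed-point equation k²β³ + 2kρβ² + (1 - kρ)β - 1 = 0, then L'(β) > 0. -/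
/-!
Modulo the fixed-point cubic `c(β)`, the derivative of the loss is a quadratic:
`L'(β) = 2 (1 - β - kρβ²) + 4 c(β)`. Multiplying that quadratic by
`k²β² + 2kρβ + 1 = (kβ + ρ)² + 1 - ρ² > 0` gives `k²β²(1 - ρ²)` modulo `c(β)`.
A root of `c` is nonzero, so there the quadratic, and hence `L'(β)`, is positive.
-/

def welfareLoss (k ρ b : ℝ) : ℝ := (k*b^2 + b - 1)^2 + 2*(1-ρ)*b^2*(1-b)*k

def fixedPointCubic (k ρ b : ℝ) : ℝ := k^2 * b^3 + 2*k*ρ*b^2 + (1 - k*ρ)*b - 1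

theorem hasDerivAt_welfareLoss (k ρ b : ℝ) :
    HasDerivAt (welfareLoss k ρ) (2 * (1 - b - k*ρ*b^2) + 4 * fixedPointCubic k ρ b) b := by
  have hsq : HasDerivAt (fun x : ℝ => x^2) (2*b) b := by simpa using hasDerivAt_pow 2 b
  have h := (((hsq.const_mul k).add (hasDerivAt_id' b)).sub_const 1).fun_pow 2 |>.add
    (((hsq.const_mul (2*(1-ρ))).fun_mul ((hasDerivAt_id' b).const_sub 1)).mul_const k)
  refine h.congr_deriv ?_
  simp only [fixedPointCubic, Pi.add_apply]
  ring

theorem ne_zero_of_fixedPointCubic_eq_zero {k ρ b : ℝ} (h : fixedPointCubic k ρ b = 0) : b ≠ 0 := by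
  rintro rfl
  norm_num [fixedPointCubic] at h

theorem pos_of_fixedPointCubic_eq_zero {k ρ b : ℝ} (hk : k ≠ 0) (hρ : |ρ| < 1)
    (h : fixedPointCubic k ρ b = 0) : 0 < 1 - b - k*ρ*b^2 := by
  have hρ2 : 0 < 1 - ρ^2 := by nlinarith [abs_lt.mp hρ]
  have hD : 0 < k^2*b^2 + 2*k*ρ*b + 1 := by nlinarith [sq_nonneg (k*b + ρ)]
  have hkb : 0 < k^2 * b^2 := by
    have := ne_zero_of_fixedPointCubic_eq_zero h
    positivity
  have hkey : (1 - b - k*ρ*b^2) * (k^2*b^2 + 2*k*ρ*b + 1)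
      = k^2*b^2*(1-ρ^2) - (1 + k*ρ*b) * fixedPointCubic k ρ b := by
    rw [fixedPointCubic]; ring
  rw [h, mul_zero, sub_zero] at hkey
  exact pos_of_mul_pos_left (hkey ▸ mul_pos hkb hρ2) hD.le

/-- At any fixed point β (root of the cubic k²β³ + 2kρβ² + (1-kρ)β - 1 = 0),
the derivative of the welfare loss L is strictly positive. -/
theorem stmt_4 (k ρ : ℝ) (hk : 0 < k) (hρ : ρ ∈ Set.Ioo (-1 : ℝ) 1)
    (β : ℝ) (hβ : k^2 * β^3 + 2*k*ρ*β^2 + (1 - k*ρ)*β - 1 = 0) :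
    deriv (fun b : ℝ => (k*b^2 + b - 1)^2 + 2*(1-ρ)*b^2*(1-b)*k) β > 0 := by
  have hfix : fixedPointCubic k ρ β = 0 := hβ
  change 0 < deriv (welfareLoss k ρ) β
  rw [(hasDerivAt_welfareLoss k ρ β).deriv, hfix]
  have hmargin := pos_of_fixedPointCubic_eq_zero hk.ne' (abs_lt.mpr hρ) hfix
  linarith
end

section
/- For k > 0, ρ ∈ ℝ, x > 0, and β^m = -1/(2k), define L(β) = (kβ² + β - 1)² + 2(1-ρ)β²(1-β)k. Then L(β^m - x) - L(β^m + x) = 4(1-ρ)kx(β^m(3β^m - 2) + x²). In particular, if ρ ≤ 1 this difference is nonnegative. -/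
/-!
With `A β = k β² + β - 1` one has `A (βᵐ ± x) = A βᵐ + k x² ± (2 k βᵐ + 1) x`, and `2 k βᵐ + 1 = 0`,
so the squared term of `L` takes the same value at `βᵐ - x` and `βᵐ + x`. Only the cubic term
`2 (1 - ρ) k β² (1 - β)` contributes, and its odd part in `x` is `2 x (βᵐ (3 βᵐ - 2) + x²)`.
Since `βᵐ < 0`, both `βᵐ (3 βᵐ - 2)` and `x²` are nonnegative.
-/

def normalizedLoss (k ρ β : ℝ) : ℝ :=
  (k*β^2 + β - 1)^2 + 2*(1-ρ)*β^2*(1-β)*k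

theorem normalizedLoss_sub_normalizedLoss_reflect {k b : ℝ} (ρ x : ℝ) (hb : 2*k*b + 1 = 0) :
    normalizedLoss k ρ (b - x) - normalizedLoss k ρ (b + x) =
      4*(1-ρ)*k*x*(b*(3*b - 2) + x^2) := by
  unfold normalizedLoss
  linear_combination (-4*x*(k*b^2 + k*x^2 - 1 + b)) * hb

theorem reflect_gap_nonneg {k ρ b x : ℝ} (hk : 0 ≤ k) (hρ : ρ ≤ 1) (hb : b < 0) (hx : 0 ≤ x) :
    0 ≤ 4*(1-ρ)*k*x*(b*(3*b - 2) + x^2) := by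
  have hb' : 0 ≤ b*(3*b - 2) := mul_nonneg_of_nonpos_of_nonpos hb.le (by linarith)
  have hρ' : 0 ≤ 1 - ρ := sub_nonneg.mpr hρ
  positivity

/-- Reflection identity: L(β^m - x) - L(β^m + x) = 4(1-ρ)kx(β^m(3β^m - 2) + x²),
and this is nonnegative when ρ ≤ 1. -/
theorem stmt_8 (k ρ x : ℝ) (hk : 0 < k) (hx : 0 < x) :
    (let βm := -1/(2*k);
     let L := fun β : ℝ => (k*β^2 + β - 1)^2 + 2*(1-ρ)*β^2*(1-β)*k;
     L (βm - x) - L (βm + x) = 4*(1-ρ)*k*x*(βm*(3*βm - 2) + x^2)) ∧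
    (ρ ≤ 1 →
      (let βm := -1/(2*k);
       let L := fun β : ℝ => (k*β^2 + β - 1)^2 + 2*(1-ρ)*β^2*(1-β)*k;
       0 ≤ L (βm - x) - L (βm + x))) := by
  have hβm : 2*k*(-1/(2*k)) + 1 = 0 := by field_simp; ring
  have hreflect := normalizedLoss_sub_normalizedLoss_reflect ρ x hβm
  unfold normalizedLoss at hreflect
  refine ⟨hreflect, fun hρ => ?_⟩
  simp only [hreflect]
  exact reflect_gap_nonneg hk.le hρ (div_neg_of_neg_of_pos (by norm_num) (by positivity)) hx.le
end

section
/- For k > 0, the cubic equation k²β³ + β - 1 = 0 has a unique real solution β^fp, which lies in (0, 1), and β^fp is strictly decreasing as a function of k, with β^fp → 1 as k → 0⁺ and β^fp → 0 as k → ∞. -/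
open Filter

/-! Since `β ↦ k²β³ + β` is strictly increasing, the root is unique, and comparing
with the values `-1` at `0` and `k²` at `1` places it in `(0, 1)`.
Raising `k` raises the left-hand side at a fixed positive `β`, so the root must fall. The bounds
`1 - k² ≤ β` (from `β³ ≤ 1`) and `β³ < k⁻²` (from `β > 0`) squeeze it to `1` as `k → 0⁺` and
to `0` as `k → ∞`. -/

section FixedPointCubic

variable {k β : ℝ}

lemma strictMono_sq_mul_pow_three_add (k : ℝ) : StrictMono fun x : ℝ => k ^ 2 * x ^ 3 + x :=
  ((Odd.strictMono_pow (n := 3) (by decide)).monotone.const_mul (sq_nonneg k)).add_strictMono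
    strictMono_id

lemma eq_of_fixedPointCubic {β' : ℝ} (h : k ^ 2 * β ^ 3 + β - 1 = 0)
    (h' : k ^ 2 * β' ^ 3 + β' - 1 = 0) : β = β' :=
  (strictMono_sq_mul_pow_three_add k).injective (by linarith)

lemma mem_Ioo_of_fixedPointCubic (hk : k ≠ 0) (h : k ^ 2 * β ^ 3 + β - 1 = 0) :
    β ∈ Set.Ioo (0 : ℝ) 1 := by
  have hk2 : 0 < k ^ 2 := by positivity
  constructor
  · by_contra! hβ
    nlinarith [mul_nonneg hk2.le (pow_two_nonneg β)]
  · by_contra! hβ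
    nlinarith [one_le_pow₀ (n := 3) hβ]

lemma lt_of_fixedPointCubic_of_lt {k' β' : ℝ} (hk : 0 ≤ k) (hkk' : k < k')
    (h : k ^ 2 * β ^ 3 + β - 1 = 0) (h' : k' ^ 2 * β' ^ 3 + β' - 1 = 0) : β' < β := by
  have hβ' : 0 < β' := (mem_Ioo_of_fixedPointCubic (by linarith) h').1
  have hsq : k ^ 2 < k' ^ 2 := pow_lt_pow_left₀ hkk' hk two_ne_zero
  refine (strictMono_sq_mul_pow_three_add k).lt_iff_lt.mp ?_
  show k ^ 2 * β' ^ 3 + β' < k ^ 2 * β ^ 3 + β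
  nlinarith [mul_lt_mul_of_pos_right hsq (pow_pos hβ' 3)]

lemma one_sub_sq_le_of_fixedPointCubic (hk : k ≠ 0) (h : k ^ 2 * β ^ 3 + β - 1 = 0) :
    1 - k ^ 2 ≤ β := by
  obtain ⟨hβ0, hβ1⟩ := mem_Ioo_of_fixedPointCubic hk h
  nlinarith [pow_le_one₀ (n := 3) hβ0.le hβ1.le, sq_nonneg k]

lemma le_rpow_neg_of_fixedPointCubic (hk : 0 < k) (h : k ^ 2 * β ^ 3 + β - 1 = 0) :
    β ≤ k ^ (-(2 / 3 : ℝ)) := by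
  have hβ : 0 < β := (mem_Ioo_of_fixedPointCubic hk.ne' h).1
  have hcube : (k ^ (-(2 / 3 : ℝ))) ^ 3 = 1 / k ^ 2 := by
    rw [← Real.rpow_natCast, ← Real.rpow_mul hk.le, ← Real.rpow_natCast, one_div,
      ← Real.rpow_neg hk.le]
    norm_num
  rw [← pow_le_pow_iff_left₀ hβ.le (by positivity) three_ne_zero, hcube,
    le_div_iff₀' (by positivity)]
  linarith

end FixedPointCubic

/-- For k > 0, k²β³ + β - 1 = 0 has a unique real solution β^fp ∈ (0,1),
strictly decreasing in k, tending to 1 as k → 0⁺ and to 0 as k → ∞. -/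
theorem stmt_12 (f : ℝ → ℝ)
    (hf : ∀ k : ℝ, 0 < k → k^2 * (f k)^3 + f k - 1 = 0) :
    (∀ k : ℝ, 0 < k → ∃! β : ℝ, k^2 * β^3 + β - 1 = 0) ∧
    (∀ k : ℝ, 0 < k → f k ∈ Set.Ioo (0 : ℝ) 1) ∧
    StrictAntiOn f (Set.Ioi 0) ∧
    Tendsto f (nhdsWithin 0 (Set.Ioi 0)) (nhds 1) ∧
    Tendsto f atTop (nhds 0) := by
  refine ⟨fun k hk => ⟨f k, hf k hk, fun β hβ => eq_of_fixedPointCubic hβ (hf k hk)⟩,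
    fun k hk => mem_Ioo_of_fixedPointCubic hk.ne' (hf k hk),
    fun k hk k' hk' hkk' => lt_of_fixedPointCubic_of_lt (le_of_lt hk) hkk' (hf k hk) (hf k' hk'),
    ?_, ?_⟩
  · have hlow : Tendsto (fun k : ℝ => 1 - k ^ 2) (nhdsWithin 0 (Set.Ioi 0)) (nhds 1) :=
      ((by fun_prop : Continuous fun k : ℝ => 1 - k ^ 2).tendsto' 0 1 (by norm_num)).mono_left
        nhdsWithin_le_nhds
    refine tendsto_of_tendsto_of_tendsto_of_le_of_le' hlow tendsto_const_nhds ?_ ?_ <;>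
      filter_upwards [self_mem_nhdsWithin] with k hk
    · exact one_sub_sq_le_of_fixedPointCubic hk.ne' (hf k hk)
    · exact (mem_Ioo_of_fixedPointCubic hk.ne' (hf k hk)).2.le
  · refine tendsto_of_tendsto_of_tendsto_of_le_of_le' tendsto_const_nhds
      (tendsto_rpow_neg_atTop (by norm_num : (0 : ℝ) < 2 / 3)) ?_ ?_ <;>
      filter_upwards [eventually_gt_atTop 0] with k hk
    · exact (mem_Ioo_of_fixedPointCubic hk.ne' (hf k hk)).1.le
    · exact le_rpow_neg_of_fixedPointCubic hk (hf k hk)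
end

section
/- For k > 0, let β^fp ∈ (0,1) be the unique real solution of k²β³ + β - 1 = 0 and let β* ∈ (0,1) be the unique real solution of 2k²β³ + β - 1 = 0. Then β* < β^fp, the ratio β*/β^fp tends to 1 as k → 0⁺, and tends to (1/2)^(1/3) as k → ∞. -/
/-!
Comparing the two equations `k²β³ + β = 1 = 2k²β*³ + β*` gives `β* < β^fp` at once, and
eliminating `k²` gives `(β*/β^fp)³ = (1 - β*) / (2 (1 - β^fp))`. As `k → 0⁺` both roots are
squeezed between `1 - 2k²` and `1`; as `k → ∞` both roots tend to `0` (since `β³ ≤ 1/k²`),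
so the cube of the ratio tends to `1/2`.
-/

open Filter Topology

lemma cubic_root_lt_of_lt {a b x y : ℝ} (ha : 0 ≤ a) (hab : a < b) (hy : 0 < y)
    (hx : a * x ^ 3 + x - 1 = 0) (hy' : b * y ^ 3 + y - 1 = 0) : y < x := by
  by_contra! hxy
  have hcube : x ^ 3 ≤ y ^ 3 := (Odd.pow_le_pow (by decide)).mpr hxy
  nlinarith [mul_le_mul_of_nonneg_left hcube ha, mul_lt_mul_of_pos_right hab (pow_pos hy 3)]

lemma one_sub_le_cubic_root {a x : ℝ} (ha : 0 ≤ a) (hx1 : x ≤ 1)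
    (hx : a * x ^ 3 + x - 1 = 0) : 1 - a ≤ x := by
  have hcube : x ^ 3 ≤ 1 := by simpa using (Odd.pow_le_pow (n := 3) (by decide)).mpr hx1
  nlinarith [mul_le_mul_of_nonneg_left hcube ha]

lemma div_pow_three_eq_of_cubic_roots {a x y : ℝ} (hx0 : x ≠ 0) (hx1 : x ≠ 1)
    (hx : a * x ^ 3 + x - 1 = 0) (hy : 2 * a * y ^ 3 + y - 1 = 0) :
    (y / x) ^ 3 = (1 - y) / (2 * (1 - x)) := by
  have : 1 - x ≠ 0 := sub_ne_zero.mpr (Ne.symm hx1)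
  field_simp
  linear_combination (-(2 * y ^ 3)) * hx + x ^ 3 * hy

section Limits

variable {α : Type*} {l : Filter α}

lemma tendsto_rpow_inv_of_tendsto_pow {u : α → ℝ} {L : ℝ} {n : ℕ} (hn : n ≠ 0)
    (hu : ∀ᶠ t in l, 0 ≤ u t) (h : Tendsto (fun t => u t ^ n) l (𝓝 L)) :
    Tendsto u l (𝓝 (L ^ (n⁻¹ : ℝ))) := by
  have hroot :=
    (Real.continuousAt_rpow_const L (n⁻¹ : ℝ) (Or.inr (by positivity))).tendsto.comp h
  refine hroot.congr' ?_
  filter_upwards [hu] with t ht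
  exact Real.pow_rpow_inv_natCast ht hn

lemma tendsto_zero_of_cubic_roots {a β : α → ℝ}
    (ha : Tendsto a l atTop) (hβ : ∀ᶠ t in l, 0 < β t ∧ a t * β t ^ 3 + β t - 1 = 0) :
    Tendsto β l (𝓝 0) := by
  have hcube : Tendsto (fun t => β t ^ 3) l (𝓝 0) := by
    refine tendsto_of_tendsto_of_tendsto_of_le_of_le' tendsto_const_nhds
      ha.inv_tendsto_atTop ?_ ?_
    · filter_upwards [hβ] with t ht
      exact (pow_pos ht.1 3).le
    · filter_upwards [hβ, ha.eventually_gt_atTop 0] with t ⟨hβ0, hroot⟩ hat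
      rw [Pi.inv_apply, ← one_div, le_div_iff₀ hat]
      linarith
  have hroot := tendsto_rpow_inv_of_tendsto_pow three_ne_zero
    (hβ.mono fun t ht => ht.1.le) hcube
  rwa [Real.zero_rpow (by norm_num)] at hroot

def IsUnitCubicRoot (a x : ℝ) : Prop := x ∈ Set.Ioo 0 1 ∧ a * x ^ 3 + x - 1 = 0

variable {a x y : α → ℝ}

lemma tendsto_div_cubic_roots_of_tendsto_zero (ha : Tendsto a l (𝓝 0))
    (ha0 : ∀ᶠ t in l, 0 < a t) (hx : ∀ᶠ t in l, IsUnitCubicRoot (a t) (x t))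
    (hy : ∀ᶠ t in l, IsUnitCubicRoot (2 * a t) (y t)) :
    Tendsto (fun t => y t / x t) l (𝓝 1) := by
  have hlower : Tendsto (fun t => 1 - 2 * a t) l (𝓝 1) := by
    simpa using (ha.const_mul 2).const_sub 1
  refine tendsto_of_tendsto_of_tendsto_of_le_of_le' hlower tendsto_const_nhds ?_ ?_
  · filter_upwards [ha0, hx, hy] with t hat ⟨⟨hx0, hx1⟩, _⟩ ⟨⟨hy0, hy1⟩, hyroot⟩
    calc 1 - 2 * a t ≤ y t := one_sub_le_cubic_root (by positivity) hy1.le hyroot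
      _ ≤ y t / x t := le_div_self hy0.le hx0 hx1.le
  · filter_upwards [ha0, hx, hy] with t hat ⟨⟨hx0, _⟩, hxroot⟩ ⟨⟨hy0, _⟩, hyroot⟩
    exact (div_le_one hx0).mpr (cubic_root_lt_of_lt hat.le (by linarith) hy0 hxroot hyroot).le

lemma tendsto_div_cubic_roots_of_tendsto_atTop (ha : Tendsto a l atTop)
    (hx : ∀ᶠ t in l, IsUnitCubicRoot (a t) (x t))
    (hy : ∀ᶠ t in l, IsUnitCubicRoot (2 * a t) (y t)) :
    Tendsto (fun t => y t / x t) l (𝓝 ((1 / 2 : ℝ) ^ ((1 : ℝ) / 3))) := by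
  have hx0 : Tendsto x l (𝓝 0) :=
    tendsto_zero_of_cubic_roots ha (hx.mono fun t ht => ⟨ht.1.1, ht.2⟩)
  have hy0 : Tendsto y l (𝓝 0) := tendsto_zero_of_cubic_roots (ha.const_mul_atTop two_pos)
    (hy.mono fun t ht => ⟨ht.1.1, ht.2⟩)
  have hcube : Tendsto (fun t => (y t / x t) ^ 3) l (𝓝 (1 / 2)) := by
    have hlim : Tendsto (fun t => (1 - y t) / (2 * (1 - x t))) l
        (𝓝 ((1 - 0) / (2 * (1 - 0)))) :=
      (tendsto_const_nhds.sub hy0).div ((tendsto_const_nhds.sub hx0).const_mul 2) (by norm_num)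
    rw [show ((1 : ℝ) - 0) / (2 * (1 - 0)) = 1 / 2 by norm_num] at hlim
    refine hlim.congr' ?_
    filter_upwards [hx, hy] with t ⟨⟨hx0, hx1⟩, hxroot⟩ ⟨_, hyroot⟩
    exact (div_pow_three_eq_of_cubic_roots hx0.ne' hx1.ne hxroot hyroot).symm
  have hratio := tendsto_rpow_inv_of_tendsto_pow three_ne_zero
    (hx.and hy |>.mono fun t ht => div_nonneg ht.2.1.1.le ht.1.1.1.le) hcube
  simpa [one_div] using hratio

end Limits

/-- With β^fp the unique root of k²β³ + β - 1 = 0 and β* the unique root of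
2k²β³ + β - 1 = 0 (both in (0,1)): β* < β^fp, β*/β^fp → 1 as k → 0⁺, and
β*/β^fp → (1/2)^(1/3) as k → ∞. -/
theorem stmt_13 (f g : ℝ → ℝ)
    (hf : ∀ k : ℝ, 0 < k → f k ∈ Set.Ioo (0 : ℝ) 1 ∧ k^2 * (f k)^3 + f k - 1 = 0)
    (hg : ∀ k : ℝ, 0 < k → g k ∈ Set.Ioo (0 : ℝ) 1 ∧ 2*k^2 * (g k)^3 + g k - 1 = 0) :
    (∀ k : ℝ, 0 < k → g k < f k) ∧
    Tendsto (fun k => g k / f k) (nhdsWithin 0 (Set.Ioi 0)) (nhds 1) ∧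
    Tendsto (fun k => g k / f k) atTop (nhds ((1/2 : ℝ) ^ ((1:ℝ)/3))) := by
  have hf' : ∀ k : ℝ, 0 < k → IsUnitCubicRoot (k ^ 2) (f k) := hf
  have hg' : ∀ k : ℝ, 0 < k → IsUnitCubicRoot (2 * k ^ 2) (g k) := hg
  refine ⟨fun k hk => cubic_root_lt_of_lt (sq_nonneg k) (by nlinarith) (hg k hk).1.1
    (hf k hk).2 (hg k hk).2, ?_, ?_⟩
  · have hsq : Tendsto (fun k : ℝ => k ^ 2) (𝓝[>] 0) (𝓝 0) :=
      (Continuous.tendsto' (by fun_prop) 0 0 (by norm_num)).mono_left nhdsWithin_le_nhds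
    have hpos : ∀ᶠ k in 𝓝[>] (0 : ℝ), 0 < k := self_mem_nhdsWithin
    exact tendsto_div_cubic_roots_of_tendsto_zero hsq (hpos.mono fun k hk => by positivity)
      (hpos.mono hf') (hpos.mono hg')
  · have hpos : ∀ᶠ k in atTop, (0 : ℝ) < k := eventually_gt_atTop 0
    exact tendsto_div_cubic_roots_of_tendsto_atTop (tendsto_pow_atTop two_ne_zero)
      (hpos.mono hf') (hpos.mono hg')
end

section
/- For every k > 0, the unique real solutions β^fp of k²β³ + β - 1 = 0 and β* of 2k²β³ + β - 1 = 0 satisfy β^fp < β*·√2; consequently the ratio β*/β^fp is strictly decreasing in k. -/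
/-!
Write `φ_c x = c x³ + x`, strictly increasing for `c ≥ 0`, so that `β^fp` solves `φ_{k²} a = 1`
and `β*` solves `φ_{2k²} b = 1`. Since `φ_c (√2 b) = √2 φ_{2c} b = √2 > 1 = φ_c a`, we get
`a < √2 b`. For the monotonicity, eliminating `c` between the two equations expresses `a`
through the ratio `r = b / a` alone: `a = (2r³ - 1) / (2r³ - r)`. This function of `r` is
strictly increasing on `((√2)⁻¹, 1]`, which contains every ratio by the first part and `b < a`,
while `a` strictly decreases in `c`; hence `r` strictly decreases in `c = k²`.
-/

open Set

section Cubic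

variable {c c₁ c₂ a a₁ a₂ b b₁ b₂ : ℝ}

lemma strictMono_mul_pow_three_add (hc : 0 ≤ c) : StrictMono fun x : ℝ => c * x ^ 3 + x :=
  ((Odd.strictMono_pow (by decide : Odd 3)).monotone.const_mul hc).add_strictMono strictMono_id

lemma pos_of_mul_pow_three_add_eq_one (hc : 0 ≤ c) (ha : c * a ^ 3 + a = 1) : 0 < a :=
  (strictMono_mul_pow_three_add hc).lt_iff_lt.mp (by simp [ha])

lemma lt_mul_sqrt_two_of_roots (hc : 0 ≤ c) (ha : c * a ^ 3 + a = 1)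
    (hb : 2 * c * b ^ 3 + b = 1) : a < b * √2 := by
  have hs : √2 ^ 2 = 2 := Real.sq_sqrt zero_le_two
  refine (strictMono_mul_pow_three_add hc).lt_iff_lt.mp ?_
  calc c * a ^ 3 + a = 1 := ha
    _ < √2 := by rw [Real.lt_sqrt zero_le_one]; norm_num
    _ = c * (b * √2) ^ 3 + b * √2 := by linear_combination (-√2) * hb - c * b ^ 3 * √2 * hs

lemma root_two_mul_lt_root (hc : 0 < c) (ha : c * a ^ 3 + a = 1) (hb : 2 * c * b ^ 3 + b = 1) :
    b < a := by
  have hb₀ : 0 < b := pos_of_mul_pow_three_add_eq_one (by positivity) hb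
  refine (strictMono_mul_pow_three_add hc.le).lt_iff_lt.mp ?_
  have : 0 < c * b ^ 3 := by positivity
  linarith

lemma root_lt_root_of_lt (hc₁ : 0 ≤ c₁) (hc : c₁ < c₂) (ha₁ : c₁ * a₁ ^ 3 + a₁ = 1)
    (ha₂ : c₂ * a₂ ^ 3 + a₂ = 1) : a₂ < a₁ := by
  have ha₁₀ : 0 < a₁ := pos_of_mul_pow_three_add_eq_one hc₁ ha₁
  refine (strictMono_mul_pow_three_add (hc₁.trans hc.le)).lt_iff_lt.mp ?_
  have : c₁ * a₁ ^ 3 < c₂ * a₁ ^ 3 := by gcongr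
  linarith

end Cubic

section Ratio

/-- The root `a` of `c a³ + a = 1` in terms of the ratio `r = b / a`, where `2c b³ + b = 1`. -/
noncomputable def rootOfRatio (r : ℝ) : ℝ := (2 * r ^ 3 - 1) / (2 * r ^ 3 - r)

lemma one_lt_two_mul_sq_of_mem_Ioc {r : ℝ} (hr : r ∈ Ioc (√2)⁻¹ 1) : 1 < 2 * r ^ 2 := by
  have h : ((√2)⁻¹) ^ 2 < r ^ 2 := by gcongr; exact hr.1
  rw [inv_pow, Real.sq_sqrt zero_le_two] at h
  linarith

lemma two_mul_pow_three_sub_self_pos {r : ℝ} (hr : r ∈ Ioc (√2)⁻¹ 1) : 0 < 2 * r ^ 3 - r := by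
  have hr₀ : 0 < r := (by positivity : (0 : ℝ) < (√2)⁻¹).trans hr.1
  nlinarith [one_lt_two_mul_sq_of_mem_Ioc hr]

lemma strictMonoOn_rootOfRatio : StrictMonoOn rootOfRatio (Ioc (√2)⁻¹ 1) := by
  intro r₁ hr₁ r₂ hr₂ hr
  have hD₁ := two_mul_pow_three_sub_self_pos hr₁
  have hD₂ := two_mul_pow_three_sub_self_pos hr₂
  have hcross : (2 * r₂ ^ 3 - 1) * (2 * r₁ ^ 3 - r₁) - (2 * r₁ ^ 3 - 1) * (2 * r₂ ^ 3 - r₂) =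
      (r₂ - r₁) * (2 * r₁ ^ 2 * (1 - r₂) + 2 * r₂ ^ 2 * (1 - r₁) + (2 * r₁ * r₂ - 1)) := by
    ring
  have hQ : 0 < 2 * r₁ ^ 2 * (1 - r₂) + 2 * r₂ ^ 2 * (1 - r₁) + (2 * r₁ * r₂ - 1) := by
    have : 1 < 2 * r₁ * r₂ := by
      nlinarith [one_lt_two_mul_sq_of_mem_Ioc hr₁, one_lt_two_mul_sq_of_mem_Ioc hr₂]
    nlinarith [hr₁.2, hr₂.2]
  rw [rootOfRatio, rootOfRatio, div_lt_div_iff₀ hD₁ hD₂]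
  linarith [mul_pos (sub_pos.mpr hr) hQ]

variable {c a b : ℝ}

lemma mul_sub_eq_of_roots (ha : c * a ^ 3 + a = 1) (hb : 2 * c * b ^ 3 + b = 1) (ha₀ : a ≠ 0) :
    a * (2 * (b / a) ^ 3 - b / a) = 2 * (b / a) ^ 3 - 1 := by
  have hb' : b = b / a * a := (div_mul_cancel₀ b ha₀).symm
  rw [hb'] at hb
  linear_combination (2 * (b / a) ^ 3) * ha - hb

lemma div_mem_Ioc_of_roots (hc : 0 < c) (ha : c * a ^ 3 + a = 1)
    (hb : 2 * c * b ^ 3 + b = 1) : b / a ∈ Ioc (√2)⁻¹ 1 := by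
  have ha₀ : 0 < a := pos_of_mul_pow_three_add_eq_one hc.le ha
  refine ⟨?_, (div_le_one ha₀).mpr (root_two_mul_lt_root hc ha hb).le⟩
  rw [lt_div_iff₀ ha₀, inv_mul_eq_div, div_lt_iff₀ (by positivity)]
  exact lt_mul_sqrt_two_of_roots hc.le ha hb

lemma eq_rootOfRatio_of_roots (hc : 0 < c) (ha : c * a ^ 3 + a = 1)
    (hb : 2 * c * b ^ 3 + b = 1) : a = rootOfRatio (b / a) := by
  rw [rootOfRatio, eq_div_iff (two_mul_pow_three_sub_self_pos (div_mem_Ioc_of_roots hc ha hb)).ne']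
  exact mul_sub_eq_of_roots ha hb (pos_of_mul_pow_three_add_eq_one hc.le ha).ne'

lemma div_lt_div_of_roots {c₁ c₂ a₁ a₂ b₁ b₂ : ℝ} (hc₁ : 0 < c₁) (hc : c₁ < c₂)
    (ha₁ : c₁ * a₁ ^ 3 + a₁ = 1) (hb₁ : 2 * c₁ * b₁ ^ 3 + b₁ = 1)
    (ha₂ : c₂ * a₂ ^ 3 + a₂ = 1) (hb₂ : 2 * c₂ * b₂ ^ 3 + b₂ = 1) : b₂ / a₂ < b₁ / a₁ := by
  have hc₂ : 0 < c₂ := hc₁.trans hc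
  refine (strictMonoOn_rootOfRatio.lt_iff_lt (div_mem_Ioc_of_roots hc₂ ha₂ hb₂)
    (div_mem_Ioc_of_roots hc₁ ha₁ hb₁)).mp ?_
  rw [← eq_rootOfRatio_of_roots hc₁ ha₁ hb₁, ← eq_rootOfRatio_of_roots hc₂ ha₂ hb₂]
  exact root_lt_root_of_lt hc₁.le hc ha₁ ha₂

end Ratio

/-- For every k > 0, the roots β^fp of k²β³ + β - 1 = 0 and β* of
2k²β³ + β - 1 = 0 satisfy β^fp < β*·√2; consequently β*/β^fp is strictly
decreasing in k. -/
theorem stmt_14 (f g : ℝ → ℝ)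
    (hf : ∀ k : ℝ, 0 < k → k^2 * (f k)^3 + f k - 1 = 0)
    (hg : ∀ k : ℝ, 0 < k → 2*k^2 * (g k)^3 + g k - 1 = 0) :
    (∀ k : ℝ, 0 < k → f k < g k * Real.sqrt 2) ∧
    StrictAntiOn (fun k => g k / f k) (Set.Ioi 0) := by
  have hf' : ∀ k : ℝ, 0 < k → k ^ 2 * f k ^ 3 + f k = 1 := fun k hk => sub_eq_zero.mp (hf k hk)
  have hg' : ∀ k : ℝ, 0 < k → 2 * k ^ 2 * g k ^ 3 + g k = 1 := fun k hk => sub_eq_zero.mp (hg k hk)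
  refine ⟨fun k hk => lt_mul_sqrt_two_of_roots (sq_nonneg k) (hf' k hk) (hg' k hk), ?_⟩
  intro k₁ hk₁ k₂ hk₂ hk
  exact div_lt_div_of_roots (pow_pos hk₁ 2) (pow_lt_pow_left₀ hk hk₁.le two_ne_zero)
    (hf' k₁ hk₁) (hg' k₁ hk₁) (hf' k₂ hk₂) (hg' k₂ hk₂)
end

section
/- In the binary signaling model with π ∈ (0,1) and c ∈ (0, π): the fixed-point policy Y^fp(1) = π, Y^fp(0) = 0 induces pooling (both types choose x = 1) and yields designer welfare -π(1-π), while the commitment-optimal policy Y*(0) = π(1-c), Y*(1) = π(1-c) + c induces full separation (x = η) and yields welfare -(1-c)²(1-π)π, which is strictly larger. Moreover the allocation spreads satisfy Δ* = c < Δ^fp = π < Δⁿ = 1. -/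
theorem one_sub_sq_mul_lt_self {c w : ℝ} (hc₀ : 0 < c) (hc₂ : c < 2) (hw : 0 < w) :
    (1 - c) ^ 2 * w < w := by
  have hsq : (1 - c) ^ 2 < 1 := by
    rw [sq_lt_one_iff_abs_lt_one, abs_sub_lt_iff]
    constructor <;> linarith
  simpa using mul_lt_mul_of_pos_right hsq hw

/-- Binary signaling model: the fixed-point policy (Y(1)=π, Y(0)=0) induces
pooling and gives welfare -π(1-π); the commitment policy (Y(0)=π(1-c),
Y(1)=π(1-c)+c) induces separation and gives welfare -(1-c)²(1-π)π, strictly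
larger; and the spreads satisfy Δ* = c < Δ^fp = π < Δⁿ = 1. -/
theorem stmt_17 (π c : ℝ) (hπ : π ∈ Set.Ioo (0 : ℝ) 1) (hc : c ∈ Set.Ioo 0 π) :
    -- type 0 strictly prefers x = 1 under the fixed-point policy (pooling)
    ((0 : ℝ) - c*0 < π - c*1) ∧
    -- pooling welfare equals -π(1-π)
    (-(π*(π - 1)^2 + (1-π)*(π - 0)^2) = -(π*(1-π))) ∧
    -- type 0 weakly prefers x = 0 under the commitment policy (separation)
    ((π*(1-c) + c) - c*1 ≤ π*(1-c) - c*0) ∧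
    -- separation welfare equals -(1-c)²(1-π)π
    (-((1-π)*(π*(1-c) - 0)^2 + π*(π*(1-c) + c - 1)^2) = -((1-c)^2*(1-π)*π)) ∧
    -- commitment welfare strictly exceeds fixed-point welfare
    (-(π*(1-π)) < -((1-c)^2*(1-π)*π)) ∧
    -- spreads: Δ* = c < Δ^fp = π < Δⁿ = 1
    ((π*(1-c) + c) - π*(1-c) = c ∧ π - 0 = π ∧ c < π ∧ π < 1) := by
  obtain ⟨hπ₀, hπ₁⟩ := hπ
  obtain ⟨hc₀, hcπ⟩ := hc
  have hvar : 0 < π * (1 - π) := mul_pos hπ₀ (sub_pos.2 hπ₁)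
  have hwelfare : (1 - c) ^ 2 * (1 - π) * π < π * (1 - π) := by
    calc (1 - c) ^ 2 * (1 - π) * π = (1 - c) ^ 2 * (π * (1 - π)) := by ring
      _ < π * (1 - π) := one_sub_sq_mul_lt_self hc₀ (by linarith) hvar
  exact ⟨by linarith, by ring, by linarith, by ring, neg_lt_neg hwelfare, by ring, by ring,
    hcπ, hπ₁⟩
end

section
/- In the binary signaling model with π ∈ (0,1), c ∈ (0, π): among all policies Y : {0,1} → ℝ with spread Δ = Y(1) - Y(0) ∈ [0, c] (so that the agent fully separates, x = η), the designer's loss (1-π)·Y(0)² + π·(Y(1) - 1)² is minimized by choosing Δ = c, Y(0) = π(1-c), Y(1) = π(1-c) + c, giving minimized loss (1-c)²(1-π)π. -/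
/-!
Completing the square in `Y(0)` for a fixed spread `Δ = Y(1) - Y(0)` writes the loss as
`(Y(0) - π(1-Δ))² + π(1-π)(1-Δ)²`. The second term decreases in `Δ ≤ 1`, so under `Δ ≤ c < 1`
the loss is at least `π(1-π)(1-c)²`, attained at `Δ = c`, `Y(0) = π(1-c)`.
-/

def separationLoss (π y₀ y₁ : ℝ) : ℝ := (1 - π) * y₀ ^ 2 + π * (y₁ - 1) ^ 2

theorem separationLoss_eq_sq_add (π y₀ y₁ : ℝ) :
    separationLoss π y₀ y₁ =
      (y₀ - π * (1 - (y₁ - y₀))) ^ 2 + π * (1 - π) * (1 - (y₁ - y₀)) ^ 2 := by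
  unfold separationLoss
  ring

theorem separationLoss_optimal (π c : ℝ) :
    separationLoss π (π * (1 - c)) (π * (1 - c) + c) = π * (1 - π) * (1 - c) ^ 2 := by
  rw [separationLoss_eq_sq_add]
  ring

theorem mul_one_sub_mul_sq_le_separationLoss (π y₀ y₁ : ℝ) :
    π * (1 - π) * (1 - (y₁ - y₀)) ^ 2 ≤ separationLoss π y₀ y₁ := by
  rw [separationLoss_eq_sq_add]
  exact le_add_of_nonneg_left (sq_nonneg _)

theorem separationLoss_optimal_le {π c y₀ y₁ : ℝ} (hπ₀ : 0 ≤ π) (hπ₁ : π ≤ 1) (hc : c ≤ 1)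
    (hspread : y₁ - y₀ ≤ c) :
    separationLoss π (π * (1 - c)) (π * (1 - c) + c) ≤ separationLoss π y₀ y₁ :=
  calc separationLoss π (π * (1 - c)) (π * (1 - c) + c) = π * (1 - π) * (1 - c) ^ 2 :=
        separationLoss_optimal π c
    _ ≤ π * (1 - π) * (1 - (y₁ - y₀)) ^ 2 := by
        have : 0 ≤ 1 - π := sub_nonneg.mpr hπ₁
        have : 0 ≤ 1 - c := sub_nonneg.mpr hc
        gcongr
    _ ≤ separationLoss π y₀ y₁ := mul_one_sub_mul_sq_le_separationLoss π y₀ y₁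

/-- Among separating policies (spread in [0,c]), the loss
(1-π)Y(0)² + π(Y(1)-1)² is minimized at Y(0) = π(1-c), Y(1) = π(1-c)+c,
with minimized loss (1-c)²(1-π)π. -/
theorem stmt_18 (π c : ℝ) (hπ : π ∈ Set.Ioo (0 : ℝ) 1) (hc : c ∈ Set.Ioo 0 π) :
    (∀ Y0 Y1 : ℝ, Y1 - Y0 ∈ Set.Icc (0 : ℝ) c →
      (1-π)*(π*(1-c))^2 + π*((π*(1-c) + c) - 1)^2 ≤ (1-π)*Y0^2 + π*(Y1 - 1)^2) ∧
    ((π*(1-c) + c) - π*(1-c) = c) ∧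
    ((1-π)*(π*(1-c))^2 + π*((π*(1-c) + c) - 1)^2 = (1-c)^2*(1-π)*π) := by
  have hc₁ : c ≤ 1 := (hc.2.trans hπ.2).le
  refine ⟨fun Y0 Y1 hY => separationLoss_optimal_le hπ.1.le hπ.2.le hc₁ hY.2, by ring, ?_⟩
  exact (separationLoss_optimal π c).trans (by ring)
end

section
/- For k > 0 and ρ ∈ [0, 1), every root of the cubic L'(β) = -2(1-β) + 4k²β³ + 2ρkβ(3β - 2) on (0, ∞) is unique; i.e., L' has exactly one positive root, and L'' > 0 at that root. -/
/-!
Write `p x = a x³ + b x² + c x + e` with `a, b ≥ 0` and `e < 0`. For positive `x`, `y` one has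
`y p(x) - x p(y) = (x - y) (a x y (x + y) + b x y - e)` with the second factor positive, so
`p x / x` is strictly increasing on `(0, ∞)` and `p` has at most one positive root. Likewise
`x p'(x) - p(x) = 2 a x³ + b x² - e > 0`, so `p'` is positive at a positive root.
For `L'` these are the coefficients `4k², 6ρk, 2 - 4ρk, -2`, and `L'(0) < 0 < L'(1)`.
-/

def cubic (a b c e x : ℝ) : ℝ := a * x ^ 3 + b * x ^ 2 + c * x + e

section Cubic

variable {a b c e : ℝ}

theorem hasDerivAt_cubic (x : ℝ) :
    HasDerivAt (cubic a b c e) (3 * a * x ^ 2 + 2 * b * x + c) x := by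
  have h := ((((hasDerivAt_pow 3 x).const_mul a).add ((hasDerivAt_pow 2 x).const_mul b)).add
    ((hasDerivAt_id x).const_mul c)).add_const e
  exact h.congr_deriv (by norm_num; ring)

theorem exists_root_cubic_mem_Ioo (he : e < 0) (h1 : 0 < a + b + c + e) :
    ∃ x ∈ Set.Ioo (0 : ℝ) 1, cubic a b c e x = 0 := by
  have hcont : Continuous (cubic a b c e) := by unfold cubic; fun_prop
  have hsign : (0 : ℝ) ∈ Set.Ioo (cubic a b c e 0) (cubic a b c e 1) :=
    ⟨by simpa [cubic] using he, by simpa [cubic] using h1⟩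
  exact intermediate_value_Ioo zero_le_one hcont.continuousOn hsign

theorem cubic_pos_root_unique (ha : 0 ≤ a) (hb : 0 ≤ b) (he : e < 0) {x y : ℝ}
    (hx : 0 < x) (hy : 0 < y) (hpx : cubic a b c e x = 0) (hpy : cubic a b c e y = 0) :
    x = y := by
  unfold cubic at hpx hpy
  have hfactor : (x - y) * (a * x * y * (x + y) + b * x * y - e) = 0 := by
    linear_combination y * hpx - x * hpy
  have hpos : 0 < a * x * y * (x + y) + b * x * y - e := by
    have := mul_pos hx hy
    have : 0 ≤ a * x * y * (x + y) := by positivity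
    nlinarith
  exact sub_eq_zero.1 ((mul_eq_zero.1 hfactor).resolve_right hpos.ne')

theorem cubic_deriv_pos_of_pos_root (ha : 0 ≤ a) (hb : 0 ≤ b) (he : e < 0) {x : ℝ}
    (hx : 0 < x) (hpx : cubic a b c e x = 0) :
    0 < deriv (cubic a b c e) x := by
  rw [(hasDerivAt_cubic x).deriv]
  unfold cubic at hpx
  have hEuler : x * (3 * a * x ^ 2 + 2 * b * x + c) = 2 * a * x ^ 3 + b * x ^ 2 - e := by
    linear_combination hpx
  have hprod : 0 < x * (3 * a * x ^ 2 + 2 * b * x + c) := by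
    rw [hEuler]
    have : 0 ≤ 2 * a * x ^ 3 + b * x ^ 2 := by positivity
    linarith
  exact pos_of_mul_pos_right hprod hx.le

end Cubic

/-- For k > 0 and ρ ∈ [0,1), L'(β) = -2(1-β) + 4k²β³ + 2ρkβ(3β-2) has exactly
one root on (0,∞), and its derivative (L'') is positive at that root. -/
theorem stmt_19 (k ρ : ℝ) (hk : 0 < k) (hρ : ρ ∈ Set.Ico (0 : ℝ) 1) :
    (∃! β : ℝ, 0 < β ∧ -2*(1-β) + 4*k^2*β^3 + 2*ρ*k*β*(3*β - 2) = 0) ∧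
    (∀ β : ℝ, 0 < β → -2*(1-β) + 4*k^2*β^3 + 2*ρ*k*β*(3*β - 2) = 0 →
      deriv (fun b : ℝ => -2*(1-b) + 4*k^2*b^3 + 2*ρ*k*b*(3*b - 2)) β > 0) := by
  have hL : ∀ b : ℝ, -2*(1-b) + 4*k^2*b^3 + 2*ρ*k*b*(3*b - 2)
      = cubic (4*k^2) (6*ρ*k) (2 - 4*ρ*k) (-2) b := by
    intro b; unfold cubic; ring
  simp only [hL]
  have ha : 0 ≤ 4*k^2 := by positivity
  have hb : 0 ≤ 6*ρ*k := by have := hρ.1; positivity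
  have he : (-2 : ℝ) < 0 := by norm_num
  have h1 : 0 < 4*k^2 + 6*ρ*k + (2 - 4*ρ*k) + -2 := by nlinarith [hρ.1]
  obtain ⟨β, hβ, hroot⟩ := exists_root_cubic_mem_Ioo he h1
  exact ⟨⟨β, ⟨hβ.1, hroot⟩, fun y hy => cubic_pos_root_unique ha hb he hy.1 hβ.1 hy.2 hroot⟩,
    fun x hx hpx => cubic_deriv_pos_of_pos_root ha hb he hx hpx⟩
end
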